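/- Trust-region elimination inequality: let T ⊆ X be a nonempty bounded set and suppose all sampled points lie in T (x_i ∈ T for all i). Then sup_{x ∈ T} U(x) ≤ sup_{x ∈ T} f(x) + 2β + 2L·diam(T), where β = max_{1≤i≤N} r_i and diam(T) = sup_{x,y ∈ T} d(x,y). Moreover, writing Δ = f* − sup_{x ∈ T} f(x), if additionally L·diam(T) ≤ Δ/8 and β ≤ Δ/8, then sup_{x ∈ T} U(x) ≤ f* − Δ/2. -/

import Mathlib

/-- Lipschitz UCB envelope `U(x) = min_i (μ_i + r_i + L·d(x, x_i))`. -/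
noncomputable def lipUCB {X : Type*} [MetricSpace X] {N : ℕ}
    (L : ℝ) (xs : Fin N → X) (μ r : Fin N → ℝ) (x : X) : ℝ :=
  ⨅ i, (μ i + r i + L * dist x (xs i))

/-!
Fix any sample `i`. Since `μ i ≤ f (xs i) + r i`, the envelope satisfies
`U x ≤ f (xs i) + 2 r i + L·d(x, xs i)`, and for `x` and `xs i` in `T` the right side is at
most `sup_T f + 2β + L·diam T`. The second claim is then linear arithmetic in `Δ`, which is
nonnegative because `0 ≤ L·diam T ≤ Δ/8`.
-/

section LipUCB

variable {X : Type*} [MetricSpace X] {N : ℕ} {L : ℝ} {xs : Fin N → X} {μ r : Fin N → ℝ}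

theorem lipUCB_le (x : X) (i : Fin N) : lipUCB L xs μ r x ≤ μ i + r i + L * dist x (xs i) :=
  ciInf_le (Finite.bddBelow_range _) i

theorem lipUCB_le_of_abs_sub_le {f : X → ℝ} (x : X) {i : Fin N}
    (hgood : |μ i - f (xs i)| ≤ r i) :
    lipUCB L xs μ r x ≤ f (xs i) + 2 * r i + L * dist x (xs i) := by
  have hμ : μ i ≤ f (xs i) + r i := by linarith [(abs_le.mp hgood).2]
  linarith [lipUCB_le (L := L) (xs := xs) (μ := μ) (r := r) x i]

theorem sSup_lipUCB_image_le (hL : 0 ≤ L) {f : X → ℝ} {T : Set X} (hT : T.Nonempty)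
    (hTbdd : Bornology.IsBounded T) (hfbdd : BddAbove (f '' T)) (i : Fin N)
    (hgood : |μ i - f (xs i)| ≤ r i) (hxsT : xs i ∈ T) :
    sSup (lipUCB L xs μ r '' T) ≤ sSup (f '' T) + 2 * (⨆ j, r j) + L * Metric.diam T := by
  refine csSup_le (hT.image _) ?_
  rintro _ ⟨x, hx, rfl⟩
  have hf : f (xs i) ≤ sSup (f '' T) := le_csSup hfbdd ⟨xs i, hxsT, rfl⟩
  have hr : r i ≤ ⨆ j, r j := le_ciSup (Finite.bddAbove_range _) i
  have hdist : L * dist x (xs i) ≤ L * Metric.diam T :=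
    mul_le_mul_of_nonneg_left (Metric.dist_le_diam_of_mem hTbdd hx hxsT) hL
  linarith [lipUCB_le_of_abs_sub_le (L := L) x hgood]

end LipUCB

theorem trust_region_elimination_general {X : Type*} [MetricSpace X]
    {L : ℝ} (hL : 0 ≤ L) {f : X → ℝ}
    {N : ℕ} (hN : 1 ≤ N) (xs : Fin N → X) (μ r : Fin N → ℝ)
    (hgood : ∀ i, |μ i - f (xs i)| ≤ r i)
    (xstar : X)
    (T : Set X) (hT : T.Nonempty) (hTbdd : Bornology.IsBounded T)
    (hxsT : ∀ i, xs i ∈ T)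
    (hfbdd : BddAbove (f '' T))
    (β : ℝ) (hβ : β = ⨆ i, r i) :
    sSup (lipUCB L xs μ r '' T)
      ≤ sSup (f '' T) + 2 * β + 2 * L * Metric.diam T ∧
    (L * Metric.diam T ≤ (f xstar - sSup (f '' T)) / 8 →
      β ≤ (f xstar - sSup (f '' T)) / 8 →
      sSup (lipUCB L xs μ r '' T)
        ≤ f xstar - (f xstar - sSup (f '' T)) / 2) := by
  let i₀ : Fin N := ⟨0, hN⟩
  have hsup := sSup_lipUCB_image_le hL hT hTbdd hfbdd i₀ (hgood i₀) (hxsT i₀)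
  have hdiam : 0 ≤ L * Metric.diam T := mul_nonneg hL Metric.diam_nonneg
  subst hβ
  exact ⟨by linarith, fun _ _ => by linarith⟩

/-- Trust-region elimination inequality: if all sampled points lie in a
nonempty bounded region `T`, then
`sup_T U ≤ sup_T f + 2β + 2L·diam(T)` where `β = max_i r_i`; moreover, with
`Δ = f* − sup_T f`, if `L·diam(T) ≤ Δ/8` and `β ≤ Δ/8` then
`sup_T U ≤ f* − Δ/2`. -/
theorem trust_region_elimination {X : Type*} [MetricSpace X]
    {L : ℝ} (hL : 0 ≤ L) {f : X → ℝ}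
    (hf : ∀ x y, |f x - f y| ≤ L * dist x y)
    {N : ℕ} (hN : 1 ≤ N) (xs : Fin N → X) (μ r : Fin N → ℝ)
    (hr : ∀ i, 0 ≤ r i)
    (hgood : ∀ i, |μ i - f (xs i)| ≤ r i)
    (xstar : X) (hopt : ∀ y : X, f y ≤ f xstar)
    (T : Set X) (hT : T.Nonempty) (hTbdd : Bornology.IsBounded T)
    (hxsT : ∀ i, xs i ∈ T)
    (hfbdd : BddAbove (f '' T))
    (β : ℝ) (hβ : β = ⨆ i, r i) :
    sSup (lipUCB L xs μ r '' T)
      ≤ sSup (f '' T) + 2 * β + 2 * L * Metric.diam T ∧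
    (L * Metric.diam T ≤ (f xstar - sSup (f '' T)) / 8 →
      β ≤ (f xstar - sSup (f '' T)) / 8 →
      sSup (lipUCB L xs μ r '' T)
        ≤ f xstar - (f xstar - sSup (f '' T)) / 2) :=
  trust_region_elimination_general hL hN xs μ r hgood xstar T hT hTbdd hxsT hfbdd β hβ
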